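/- arXiv:0705.1690 — 2 statements merged into one kernel-verified Lean document; each statement's English description precedes it below -/
import Mathlib

section
/- There exists a constant C > 0 such that for every irrational x ∈ ℝ: B_1(x) < ∞ if and only if B_0(x) < ∞ and B_0(−x) < ∞; and in that case |B_1(x) − (B_0(x) + B_0(−x))| ≤ C. In other words, the difference between the Brjuno function B_1 and the even part B_0^+(x) = B_0(x) + B_0(−x) of the semi-Brjuno function is bounded. -/
open Set Filter
open scoped ENNReal

/-- The Gauss map `G(t) = 1/t − ⌊1/t⌋`. -/
noncomputable def gmap (t : ℝ) : ℝ := 1 / t - ⌊1 / t⌋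

/-- The Brjuno function `B_1(x) = ∑_{n≥0} β_{n−1}·log(1/x_n) ∈ [0,∞]`, where
`x_0 = x − ⌊x⌋`, `x_{n+1} = G(x_n)` and `β_{n−1} = x_0⋯x_{n−1}` (`β_{-1} = 1`). -/
noncomputable def B1 (x : ℝ) : ℝ≥0∞ :=
  ∑' n : ℕ, ENNReal.ofReal
    ((∏ i ∈ Finset.range n, gmap^[i] (Int.fract x)) * Real.log (1 / (gmap^[n] (Int.fract x))))

/-- The by-excess continued fraction map `A_0(x) = ⌊1/x + 1⌋ − 1/x`. -/
noncomputable def exm (x : ℝ) : ℝ := ⌊1 / x + 1⌋ - 1 / x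

/-- The semi-Brjuno function `B_0(x) = ∑_{n≥0} β*_{n−1}·log(1/y_n) ∈ [0,∞]`, where
`y_0 = x − ⌊x⌋`, `y_{n+1} = A_0(y_n)` and `β*_{n−1} = y_0⋯y_{n−1}` (`β*_{-1} = 1`). -/
noncomputable def B0 (x : ℝ) : ℝ≥0∞ :=
  ∑' n : ℕ, ENNReal.ofReal
    ((∏ i ∈ Finset.range n, exm^[i] (Int.fract x)) * Real.log (1 / (exm^[n] (Int.fract x))))

/-!
Write `t = fract x`, so that `fract (-x) = 1 - t`. Splitting the Brjuno series of `t` into its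
even and odd terms gives `B₁(x) = log (1/t) + t T(G t) + T(t)` with
`T(z) = ∑ⱼ x₀⋯x₂ⱼ log (1/x₂ⱼ₊₁)`, while `A₀ = 1 - G` gives
`B₀(x) = log (1/t) + t S(1 - G t)` and `B₀(-x) = S(1 - t)`, where `S` is the semi-Brjuno
series. Hence it suffices that `T(z) ≤ S(1 - z) ≤ T(z) + 4`, which follows by comparing the
functional equations of `T` and `S`. For `z > 1/2` one has `1 - z = z G(z)` and
`A₀(1 - z) = 1 - G²(z)`, and `log (1/(1 - z)) - z log (1/G z)` is the binary entropy of `z`,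
which lies in `[0, 1]`. For `z < 1/2` one has `A₀(1 - z) = 1 - u` with `u = z/(1 - z)` and
`G u = G z`, which reduces `z` to `u`. In the upper bound each step costs at most
`2 x₀⋯x₂ⱼ₋₁ ≤ 2 · 2⁻ʲ`, because `x G(x) ≤ 1/2`.
-/

lemma gmap_eq_fract (t : ℝ) : gmap t = Int.fract (1 / t) := rfl

lemma gmap_nonneg (t : ℝ) : 0 ≤ gmap t := Int.fract_nonneg _

lemma gmap_lt_one (t : ℝ) : gmap t < 1 := Int.fract_lt_one _

lemma iterate_gmap_nonneg {t : ℝ} (h0 : 0 ≤ t) (n : ℕ) : 0 ≤ gmap^[n] t := by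
  cases n with
  | zero => exact h0
  | succ n => rw [Function.iterate_succ_apply']; exact gmap_nonneg _

lemma exm_eq_one_sub_gmap (t : ℝ) : exm t = 1 - gmap t := by
  rw [exm, gmap, ← Int.cast_one, Int.floor_add_intCast]
  push_cast
  ring

lemma log_one_div_nonneg {t : ℝ} (h0 : 0 ≤ t) (h1 : t ≤ 1) : 0 ≤ Real.log (1 / t) := by
  rw [one_div, Real.log_inv]
  exact neg_nonneg.mpr (Real.log_nonpos h0 h1)

lemma gmap_of_half_lt {z : ℝ} (hz : 2⁻¹ < z) (h1 : z ≤ 1) : gmap z = 1 / z - 1 := by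
  have hz0 : 0 < z := by linarith
  have hfloor : ⌊1 / z⌋ = 1 := by
    rw [Int.floor_eq_iff]
    push_cast
    constructor
    · rw [le_div_iff₀ hz0]; linarith
    · rw [div_lt_iff₀ hz0]; linarith
  rw [gmap, hfloor, Int.cast_one]

lemma mul_gmap_le_half {t : ℝ} (h0 : 0 ≤ t) (h1 : t ≤ 1) : t * gmap t ≤ 2⁻¹ := by
  rcases le_or_gt t 2⁻¹ with ht | ht
  · nlinarith [gmap_nonneg t, gmap_lt_one t]
  · rw [gmap_of_half_lt ht h1, mul_sub, mul_one_div_cancel (by positivity)]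
    linarith

structure IsIrrFract (t : ℝ) : Prop where
  pos : 0 < t
  lt_one : t < 1
  irrational : Irrational t

lemma Irrational.isIrrFract_fract {x : ℝ} (hx : Irrational x) : IsIrrFract (Int.fract x) :=
  ⟨Int.fract_pos.mpr (hx.ne_int _), Int.fract_lt_one x, hx.sub_intCast _⟩

namespace IsIrrFract

variable {t : ℝ}

lemma gmap (h : IsIrrFract t) : IsIrrFract (gmap t) := by
  have hinv : Irrational (1 / t) := by simpa only [one_div] using h.irrational.inv
  exact ⟨Int.fract_pos.mpr (hinv.ne_int _), Int.fract_lt_one _, hinv.sub_intCast _⟩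

lemma iterate_gmap (h : IsIrrFract t) (n : ℕ) : IsIrrFract (_root_.gmap^[n] t) := by
  induction n with
  | zero => exact h
  | succ n ih => rw [Function.iterate_succ_apply']; exact ih.gmap

lemma ne_half (h : IsIrrFract t) : t ≠ 2⁻¹ := by
  rintro rfl
  exact h.irrational ⟨2⁻¹, by norm_num⟩

lemma div_one_sub (h : IsIrrFract t) (ht : t < 2⁻¹) : IsIrrFract (t / (1 - t)) := by
  have h1t : 0 < 1 - t := by linarith [h.lt_one]
  refine ⟨div_pos h.pos h1t, (div_lt_one h1t).mpr (by linarith), ?_⟩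
  have he : t / (1 - t) = (1 / t - 1)⁻¹ := by
    rw [show 1 / t - 1 = (1 - t) / t by rw [sub_div, div_self h.pos.ne'], inv_div]
  rw [he]
  exact (by simpa only [one_div, Int.cast_one] using h.irrational.inv.sub_intCast 1 :
    Irrational (1 / t - 1)).inv

end IsIrrFract

section HalfToOne

variable {z : ℝ} (hz : 2⁻¹ < z)
include hz

lemma one_sub_eq_mul_gmap (h1 : z ≤ 1) : 1 - z = z * gmap z := by
  rw [gmap_of_half_lt hz h1, mul_sub, mul_one_div_cancel (by positivity), mul_one]

lemma exm_one_sub_of_half_lt (h1 : z < 1) : exm (1 - z) = 1 - gmap^[2] z := by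
  have hz0 : 0 < z := by linarith
  have hinv : 1 / (1 - z) = 1 / gmap z + 1 := by
    rw [gmap_of_half_lt hz h1.le]
    field_simp [show 1 - z ≠ 0 by linarith]
    ring
  rw [exm_eq_one_sub_gmap, gmap_eq_fract (1 - z), hinv, Int.fract_add_one, ← gmap_eq_fract]
  rfl

lemma log_one_div_one_sub_eq (h1 : z < 1) :
    Real.log (1 / (1 - z)) = z * Real.log (1 / gmap z) + Real.binEntropy z := by
  have hz0 : 0 < z := by linarith
  have h1z : 0 < 1 - z := by linarith
  have hinv : 1 / gmap z = z / (1 - z) := by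
    rw [gmap_of_half_lt hz h1.le, show 1 / z - 1 = (1 - z) / z by field_simp, one_div_div]
  rw [hinv, Real.log_div hz0.ne' h1z.ne', Real.binEntropy, one_div, Real.log_inv,
    Real.log_inv]
  ring

end HalfToOne

section ZeroToHalf

variable {z : ℝ}

lemma exm_one_sub_of_lt_half (h0 : 0 ≤ z) (hz : z < 2⁻¹) : exm (1 - z) = 1 - z / (1 - z) := by
  have h1z : 0 < 1 - z := by linarith
  have hfloor : ⌊1 / (1 - z)⌋ = 1 := by
    rw [Int.floor_eq_iff]
    push_cast
    constructor
    · rw [le_div_iff₀ h1z]; linarith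
    · rw [div_lt_iff₀ h1z]; linarith
  rw [exm_eq_one_sub_gmap, gmap, hfloor]
  field_simp
  ring

lemma one_div_div_one_sub (h0 : z ≠ 0) : 1 / (z / (1 - z)) = 1 / z - 1 := by
  rw [one_div_div, sub_div, div_self h0]

lemma gmap_div_one_sub (h0 : z ≠ 0) : gmap (z / (1 - z)) = gmap z := by
  rw [gmap_eq_fract, gmap_eq_fract, one_div_div_one_sub h0, ← Int.cast_one, Int.fract_sub_intCast]

lemma iterate_two_gmap_div_one_sub (h0 : z ≠ 0) : gmap^[2] (z / (1 - z)) = gmap^[2] z := by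
  rw [Function.iterate_succ_apply, gmap_div_one_sub h0, ← Function.iterate_succ_apply]

lemma floor_one_div_div_one_sub (h0 : z ≠ 0) : ⌊1 / (z / (1 - z))⌋ = ⌊1 / z⌋ - 1 := by
  rw [one_div_div_one_sub h0, ← Int.cast_one, Int.floor_sub_intCast]

lemma log_one_div_one_sub_le (h0 : 0 ≤ z) (hz : z ≤ 2⁻¹) :
    Real.log (1 / (1 - z)) ≤ 2 * z := by
  have h1z : 0 < 1 - z := by linarith
  calc Real.log (1 / (1 - z)) ≤ 1 / (1 - z) - 1 := Real.log_le_sub_one_of_pos (by positivity)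
    _ = z / (1 - z) := by field_simp; ring
    _ ≤ 2 * z := by rw [div_le_iff₀ h1z]; nlinarith

end ZeroToHalf

-- Well founded because `z ↦ z / (1 - z)` lowers `⌊1/z⌋` by one.
@[elab_as_elim]
theorem IsIrrFract.induction_half {P : ℝ → Prop}
    (large : ∀ z, IsIrrFract z → 2⁻¹ < z → P z)
    (small : ∀ z, IsIrrFract z → z < 2⁻¹ → P (z / (1 - z)) → P z)
    {z : ℝ} (hz : IsIrrFract z) : P z := by
  induction hk : (⌊1 / z⌋).toNat using Nat.strong_induction_on generalizing z with
  | _ k ih =>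
    rcases lt_or_gt_of_ne hz.ne_half with hlt | hgt
    · refine small z hz hlt (ih _ ?_ (hz.div_one_sub hlt) rfl)
      have h2 : 2 ≤ ⌊1 / z⌋ := by
        rw [Int.le_floor, le_div_iff₀ hz.pos]
        push_cast
        linarith
      rw [← hk, floor_one_div_div_one_sub hz.pos.ne']
      omega
    · exact large z hz hgt

noncomputable def brjunoTerm (t : ℝ) (n : ℕ) : ℝ≥0∞ :=
  ENNReal.ofReal ((∏ i ∈ Finset.range n, gmap^[i] t) * Real.log (1 / gmap^[n] t))

noncomputable def semiTerm (t : ℝ) (n : ℕ) : ℝ≥0∞ :=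
  ENNReal.ofReal ((∏ i ∈ Finset.range n, exm^[i] t) * Real.log (1 / exm^[n] t))

noncomputable def semiBrjuno (t : ℝ) : ℝ≥0∞ := ∑' n, semiTerm t n

/-- For `c = 0` this is the term of index `2 j + 1` of the Brjuno series of `t`; the constant
`c = 2` absorbs the error of each step comparing it with the semi-Brjuno series of `1 - t`. -/
noncomputable def oddTerm (c t : ℝ) (j : ℕ) : ℝ≥0∞ :=
  ENNReal.ofReal ((∏ i ∈ Finset.range (2 * j), gmap^[i] t) *
    (gmap^[2 * j] t * Real.log (1 / gmap^[2 * j + 1] t) + c))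

noncomputable def oddBrjuno (c t : ℝ) : ℝ≥0∞ := ∑' j, oddTerm c t j

section Recursions

variable {t : ℝ}

lemma semiTerm_zero (t : ℝ) : semiTerm t 0 = ENNReal.ofReal (Real.log (1 / t)) := by
  simp [semiTerm]

lemma semiTerm_succ (ht : 0 ≤ t) (n : ℕ) :
    semiTerm t (n + 1) = ENNReal.ofReal t * semiTerm (exm t) n := by
  simp only [semiTerm, Finset.prod_range_succ', Function.iterate_succ_apply,
    Function.iterate_zero_apply, ← ENNReal.ofReal_mul ht]
  ring_nf

lemma sum_range_succ_semiTerm (ht : 0 ≤ t) (N : ℕ) :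
    ∑ n ∈ Finset.range (N + 1), semiTerm t n
      = ENNReal.ofReal (Real.log (1 / t))
        + ENNReal.ofReal t * ∑ n ∈ Finset.range N, semiTerm (exm t) n := by
  simp only [Finset.sum_range_succ', semiTerm_succ ht, semiTerm_zero, Finset.mul_sum, add_comm]

lemma semiBrjuno_eq (ht : 0 ≤ t) :
    semiBrjuno t = ENNReal.ofReal (Real.log (1 / t)) + ENNReal.ofReal t * semiBrjuno (exm t) := by
  rw [semiBrjuno, tsum_eq_zero_add' ENNReal.summable, semiTerm_zero, semiBrjuno,
    ← ENNReal.tsum_mul_left]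
  simp only [semiTerm_succ ht]

lemma prod_range_add_two_iterate_gmap (t : ℝ) (k : ℕ) :
    ∏ i ∈ Finset.range (k + 2), gmap^[i] t
      = t * gmap t * ∏ i ∈ Finset.range k, gmap^[i] (gmap^[2] t) := by
  simp only [Finset.prod_range_succ', ← Function.iterate_add_apply]
  simp only [Function.iterate_zero_apply, Function.iterate_one, zero_add]
  ring

lemma oddTerm_zero (c t : ℝ) :
    oddTerm c t 0 = ENNReal.ofReal (t * Real.log (1 / gmap t) + c) := by
  simp [oddTerm]

lemma oddTerm_succ (c : ℝ) (ht : 0 ≤ t * gmap t) (j : ℕ) :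
    oddTerm c t (j + 1) = ENNReal.ofReal (t * gmap t) * oddTerm c (gmap^[2] t) j := by
  rw [oddTerm, oddTerm, show 2 * (j + 1) = 2 * j + 2 by ring,
    show 2 * j + 2 + 1 = 2 * j + 1 + 2 by ring, prod_range_add_two_iterate_gmap,
    Function.iterate_add_apply, Function.iterate_add_apply, ← ENNReal.ofReal_mul ht, mul_assoc]

lemma sum_range_succ_oddTerm (c : ℝ) (ht : 0 ≤ t * gmap t) (m : ℕ) :
    ∑ j ∈ Finset.range (m + 1), oddTerm c t j
      = ENNReal.ofReal (t * Real.log (1 / gmap t) + c)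
        + ENNReal.ofReal (t * gmap t) * ∑ j ∈ Finset.range m, oddTerm c (gmap^[2] t) j := by
  simp only [Finset.sum_range_succ', oddTerm_succ c ht, oddTerm_zero, Finset.mul_sum, add_comm]

lemma oddBrjuno_eq (c : ℝ) (ht : 0 ≤ t * gmap t) :
    oddBrjuno c t = ENNReal.ofReal (t * Real.log (1 / gmap t) + c)
      + ENNReal.ofReal (t * gmap t) * oddBrjuno c (gmap^[2] t) := by
  rw [oddBrjuno, tsum_eq_zero_add' ENNReal.summable, oddTerm_zero, oddBrjuno,
    ← ENNReal.tsum_mul_left]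
  simp only [oddTerm_succ c ht]

lemma tsum_brjunoTerm_eq (ht : 0 ≤ t) :
    ∑' n, brjunoTerm t n = ENNReal.ofReal (Real.log (1 / t))
      + ENNReal.ofReal t * oddBrjuno 0 (gmap t) + oddBrjuno 0 t := by
  rw [← tsum_even_add_odd (f := brjunoTerm t) ENNReal.summable ENNReal.summable,
    tsum_eq_zero_add' (f := fun k => brjunoTerm t (2 * k)) ENNReal.summable,
    oddBrjuno, oddBrjuno, ← ENNReal.tsum_mul_left]
  congr 2
  · simp [brjunoTerm]
  · refine tsum_congr fun k => ?_
    simp only [brjunoTerm, oddTerm, show 2 * (k + 1) = 2 * k + 1 + 1 by ring,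
      Finset.prod_range_succ' _ (2 * k + 1), Finset.prod_range_succ _ (2 * k),
      Function.iterate_succ_apply, Function.iterate_zero_apply, ← ENNReal.ofReal_mul ht, add_zero]
    ring_nf
  · funext k
    rw [brjunoTerm, oddTerm, Finset.prod_range_succ, add_zero, mul_assoc]

end Recursions

section Comparison

variable {z : ℝ}

lemma ofReal_one_sub_mul_step_div_one_sub (h0 : 0 < z) (h1 : z < 1) (c : ℝ) (X : ℝ≥0∞) :
    ENNReal.ofReal (1 - z) * (ENNReal.ofReal (z / (1 - z) * Real.log (1 / gmap (z / (1 - z))) + c)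
      + ENNReal.ofReal (z / (1 - z) * gmap (z / (1 - z))) * X)
    = ENNReal.ofReal (z * Real.log (1 / gmap z) + c * (1 - z))
      + ENNReal.ofReal (z * gmap z) * X := by
  have h1z : 0 ≤ 1 - z := by linarith
  have hmul : (1 - z) * (z / (1 - z)) = z := mul_div_cancel₀ z (by linarith)
  rw [gmap_div_one_sub h0.ne', mul_add, ← mul_assoc, ← ENNReal.ofReal_mul h1z,
    ← ENNReal.ofReal_mul h1z, mul_add, ← mul_assoc, ← mul_assoc, hmul, mul_comm (1 - z) c]

lemma sum_range_semiTerm_one_sub_le_oddBrjuno (N : ℕ) (hz : IsIrrFract z) :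
    ∑ n ∈ Finset.range N, semiTerm (1 - z) n ≤ oddBrjuno 2 z := by
  induction N generalizing z with
  | zero => simp
  | succ N ih =>
    have h1z : 0 < 1 - z := by linarith [hz.lt_one]
    have hzg : 0 ≤ z * gmap z := mul_nonneg hz.pos.le (gmap_nonneg z)
    have hlog : 0 ≤ Real.log (1 / gmap z) := log_one_div_nonneg (gmap_nonneg z) (gmap_lt_one z).le
    rw [sum_range_succ_semiTerm h1z.le, oddBrjuno_eq 2 hzg]
    rcases lt_or_gt_of_ne hz.ne_half with hlt | hgt
    · have hu := hz.div_one_sub hlt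
      have hug : 0 ≤ z / (1 - z) * gmap (z / (1 - z)) := mul_nonneg hu.pos.le (gmap_nonneg _)
      calc ENNReal.ofReal (Real.log (1 / (1 - z)))
            + ENNReal.ofReal (1 - z) * ∑ n ∈ Finset.range N, semiTerm (exm (1 - z)) n
          ≤ ENNReal.ofReal (Real.log (1 / (1 - z)))
            + ENNReal.ofReal (1 - z) * oddBrjuno 2 (z / (1 - z)) := by
            rw [exm_one_sub_of_lt_half hz.pos.le hlt]
            gcongr
            exact ih hu
        _ = ENNReal.ofReal (Real.log (1 / (1 - z)))
            + ENNReal.ofReal (z * Real.log (1 / gmap z) + 2 * (1 - z))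
            + ENNReal.ofReal (z * gmap z) * oddBrjuno 2 (gmap^[2] z) := by
            rw [oddBrjuno_eq 2 hug, ofReal_one_sub_mul_step_div_one_sub hz.pos hz.lt_one,
              iterate_two_gmap_div_one_sub hz.pos.ne', add_assoc]
        _ ≤ ENNReal.ofReal (z * Real.log (1 / gmap z) + 2)
            + ENNReal.ofReal (z * gmap z) * oddBrjuno 2 (gmap^[2] z) := by
            rw [← ENNReal.ofReal_add (log_one_div_nonneg h1z.le (by linarith [hz.pos]))
              (by nlinarith [hz.pos])]
            refine add_le_add_left (ENNReal.ofReal_le_ofReal ?_) _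
            linarith [log_one_div_one_sub_le hz.pos.le hlt.le]
    · have hcoef : ENNReal.ofReal (1 - z) = ENNReal.ofReal (z * gmap z) := by
        rw [one_sub_eq_mul_gmap hgt hz.lt_one.le]
      rw [exm_one_sub_of_half_lt hgt hz.lt_one, hcoef]
      gcongr
      · linarith [log_one_div_one_sub_eq hgt hz.lt_one, Real.binEntropy_le_log_two (p := z),
          Real.log_two_lt_d9]
      · exact ih (hz.iterate_gmap 2)

lemma ofReal_one_sub_mul_sum_oddTerm_div_one_sub (h0 : 0 < z) (h1 : z < 1) (m : ℕ) :
    ENNReal.ofReal (1 - z) * ∑ j ∈ Finset.range m, oddTerm 0 (z / (1 - z)) j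
      = ∑ j ∈ Finset.range m, oddTerm 0 z j := by
  cases m with
  | zero => simp
  | succ m =>
    have hu : 0 ≤ z / (1 - z) * gmap (z / (1 - z)) :=
      mul_nonneg (div_nonneg h0.le (by linarith)) (gmap_nonneg _)
    rw [sum_range_succ_oddTerm 0 hu, ofReal_one_sub_mul_step_div_one_sub h0 h1, zero_mul,
      iterate_two_gmap_div_one_sub h0.ne',
      sum_range_succ_oddTerm 0 (mul_nonneg h0.le (gmap_nonneg z))]

lemma sum_range_oddTerm_le_semiBrjuno_one_sub (m : ℕ) (hz : IsIrrFract z) :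
    ∑ j ∈ Finset.range m, oddTerm 0 z j ≤ semiBrjuno (1 - z) := by
  induction m generalizing z with
  | zero => simp
  | succ m ih =>
    refine IsIrrFract.induction_half (fun z hz hgt => ?_) (fun z hz hlt hu => ?_) hz
    · have hcoef : ENNReal.ofReal (1 - z) = ENNReal.ofReal (z * gmap z) := by
        rw [one_sub_eq_mul_gmap hgt hz.lt_one.le]
      rw [semiBrjuno_eq (by linarith [hz.lt_one]), exm_one_sub_of_half_lt hgt hz.lt_one,
        sum_range_succ_oddTerm 0 (mul_nonneg hz.pos.le (gmap_nonneg z)), hcoef, add_zero]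
      gcongr
      · linarith [log_one_div_one_sub_eq hgt hz.lt_one,
          Real.binEntropy_nonneg hz.pos.le hz.lt_one.le]
      · exact ih (hz.iterate_gmap 2)
    · rw [semiBrjuno_eq (by linarith [hz.lt_one]), exm_one_sub_of_lt_half hz.pos.le hlt,
        ← ofReal_one_sub_mul_sum_oddTerm_div_one_sub hz.pos hz.lt_one]
      exact (mul_le_mul_right hu _).trans le_add_self

end Comparison

lemma prod_range_two_mul_iterate_gmap_le {t : ℝ} (h0 : 0 ≤ t) (h1 : t ≤ 1) (j : ℕ) :
    ∏ i ∈ Finset.range (2 * j), gmap^[i] t ≤ 2⁻¹ ^ j := by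
  induction j generalizing t with
  | zero => simp
  | succ j ih =>
    rw [show 2 * (j + 1) = 2 * j + 2 by ring, prod_range_add_two_iterate_gmap, pow_succ']
    exact mul_le_mul (mul_gmap_le_half h0 h1) (ih (gmap_nonneg _) (gmap_lt_one _).le)
      (Finset.prod_nonneg fun i _ => iterate_gmap_nonneg (gmap_nonneg _) i) (by norm_num)

lemma oddBrjuno_two_le {t : ℝ} (h0 : 0 ≤ t) (h1 : t ≤ 1) :
    oddBrjuno 2 t ≤ oddBrjuno 0 t + 4 := by
  have hterm (j : ℕ) : oddTerm 2 t j ≤ oddTerm 0 t j + 2 * 2⁻¹ ^ j :=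
    calc oddTerm 2 t j
        ≤ oddTerm 0 t j + ENNReal.ofReal (2 * ∏ i ∈ Finset.range (2 * j), gmap^[i] t) := by
          rw [oddTerm, oddTerm, add_zero, mul_add, mul_comm _ (2 : ℝ)]
          exact ENNReal.ofReal_add_le
      _ ≤ oddTerm 0 t j + ENNReal.ofReal (2 * 2⁻¹ ^ j) := by
          gcongr
          exact prod_range_two_mul_iterate_gmap_le h0 h1 j
      _ = oddTerm 0 t j + 2 * 2⁻¹ ^ j := by
          rw [ENNReal.ofReal_mul zero_le_two, ENNReal.ofReal_pow (by norm_num),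
            ENNReal.ofReal_inv_of_pos zero_lt_two, ENNReal.ofReal_ofNat]
  calc oddBrjuno 2 t ≤ ∑' j, (oddTerm 0 t j + 2 * 2⁻¹ ^ j) := ENNReal.tsum_le_tsum hterm
    _ = oddBrjuno 0 t + 4 := by
      rw [ENNReal.tsum_add, ENNReal.tsum_mul_left, ENNReal.tsum_geometric_two, oddBrjuno]
      norm_num

lemma oddBrjuno_le_semiBrjuno_one_sub {z : ℝ} (hz : IsIrrFract z) :
    oddBrjuno 0 z ≤ semiBrjuno (1 - z) := by
  rw [oddBrjuno, ENNReal.tsum_eq_iSup_nat]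
  exact iSup_le fun m => sum_range_oddTerm_le_semiBrjuno_one_sub m hz

lemma semiBrjuno_one_sub_le_oddBrjuno_add {z : ℝ} (hz : IsIrrFract z) :
    semiBrjuno (1 - z) ≤ oddBrjuno 0 z + 4 := by
  refine le_trans ?_ (oddBrjuno_two_le hz.pos.le hz.lt_one.le)
  rw [semiBrjuno, ENNReal.tsum_eq_iSup_nat]
  exact iSup_le fun N => sum_range_semiTerm_one_sub_le_oddBrjuno N hz

lemma B1_eq (x : ℝ) :
    B1 x = ENNReal.ofReal (Real.log (1 / Int.fract x))
      + ENNReal.ofReal (Int.fract x) * oddBrjuno 0 (gmap (Int.fract x))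
      + oddBrjuno 0 (Int.fract x) :=
  tsum_brjunoTerm_eq (Int.fract_nonneg x)

lemma B0_eq (x : ℝ) :
    B0 x = ENNReal.ofReal (Real.log (1 / Int.fract x))
      + ENNReal.ofReal (Int.fract x) * semiBrjuno (1 - gmap (Int.fract x)) := by
  rw [← exm_eq_one_sub_gmap, ← semiBrjuno_eq (Int.fract_nonneg x)]
  rfl

lemma B0_neg_eq {x : ℝ} (hx : Int.fract x ≠ 0) : B0 (-x) = semiBrjuno (1 - Int.fract x) := by
  rw [← Int.fract_neg hx]
  rfl

lemma B1_le_B0_add_B0_neg {x : ℝ} (hx : Irrational x) : B1 x ≤ B0 x + B0 (-x) := by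
  have ht := hx.isIrrFract_fract
  rw [B1_eq, B0_eq, B0_neg_eq ht.pos.ne']
  gcongr
  · exact oddBrjuno_le_semiBrjuno_one_sub ht.gmap
  · exact oddBrjuno_le_semiBrjuno_one_sub ht

lemma B0_add_B0_neg_le_B1_add {x : ℝ} (hx : Irrational x) : B0 x + B0 (-x) ≤ B1 x + 8 := by
  have ht := hx.isIrrFract_fract
  rw [B1_eq, B0_eq, B0_neg_eq ht.pos.ne']
  set t := Int.fract x
  have hcoef : ENNReal.ofReal t ≤ 1 := ENNReal.ofReal_le_one.mpr ht.lt_one.le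
  calc ENNReal.ofReal (Real.log (1 / t)) + ENNReal.ofReal t * semiBrjuno (1 - gmap t)
        + semiBrjuno (1 - t)
      ≤ ENNReal.ofReal (Real.log (1 / t)) + ENNReal.ofReal t * (oddBrjuno 0 (gmap t) + 4)
        + (oddBrjuno 0 t + 4) := by
        gcongr
        · exact semiBrjuno_one_sub_le_oddBrjuno_add ht.gmap
        · exact semiBrjuno_one_sub_le_oddBrjuno_add ht
    _ = ENNReal.ofReal (Real.log (1 / t)) + ENNReal.ofReal t * oddBrjuno 0 (gmap t)
        + oddBrjuno 0 t + (ENNReal.ofReal t * 4 + 4) := by ring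
    _ ≤ ENNReal.ofReal (Real.log (1 / t)) + ENNReal.ofReal t * oddBrjuno 0 (gmap t)
        + oddBrjuno 0 t + (1 * 4 + 4) := by gcongr
    _ = _ := by norm_num

lemma ENNReal.abs_toReal_sub_le_of_le_of_le_add {a b c : ℝ≥0∞} (hab : a ≤ b)
    (hba : b ≤ a + c) (ha : a ≠ ⊤) (hc : c ≠ ⊤) : |a.toReal - b.toReal| ≤ c.toReal := by
  have hac : a + c ≠ ⊤ := ENNReal.add_ne_top.mpr ⟨ha, hc⟩
  have h1 := ENNReal.toReal_mono (ne_top_of_le_ne_top hac hba) hab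
  have h2 := ENNReal.toReal_mono hac hba
  rw [ENNReal.toReal_add ha hc] at h2
  rw [abs_sub_le_iff]
  constructor <;> linarith [ENNReal.toReal_nonneg (a := c)]

/-- Theorem 2.14: there is a constant `C > 0` such that for every irrational `x`,
`B_1(x) < ∞` iff both `B_0(x) < ∞` and `B_0(−x) < ∞`, and in that case
`|B_1(x) − (B_0(x) + B_0(−x))| ≤ C`: the difference between the Brjuno function and
the even part `B_0^+(x) = B_0(x) + B_0(−x)` of the semi-Brjuno function is bounded. -/
theorem B1_sub_evenPart_B0_bounded :
    ∃ C : ℝ, 0 < C ∧ ∀ x : ℝ, Irrational x →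
      (B1 x < ⊤ ↔ B0 x < ⊤ ∧ B0 (-x) < ⊤) ∧
      (B1 x < ⊤ → |(B1 x).toReal - ((B0 x).toReal + (B0 (-x)).toReal)| ≤ C) := by
  refine ⟨8, by norm_num, fun x hx => ?_⟩
  have hle := B1_le_B0_add_B0_neg hx
  have hge := B0_add_B0_neg_le_B1_add hx
  have hfin : B1 x < ⊤ ↔ B0 x < ⊤ ∧ B0 (-x) < ⊤ := by
    rw [← ENNReal.add_lt_top]
    exact ⟨fun h => hge.trans_lt (ENNReal.add_lt_top.mpr ⟨h, by simp⟩), hle.trans_lt⟩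
  refine ⟨hfin, fun h => ?_⟩
  obtain ⟨h0, h0neg⟩ := hfin.mp h
  rw [← ENNReal.toReal_add h0.ne h0neg.ne]
  simpa using ENNReal.abs_toReal_sub_le_of_le_of_le_add hle hge h.ne (by simp)
end

section
/- For every irrational x ∈ (0,1), the sum of β*_{n−1}·log(1/x_n) over all n ≥ 0 with x_n > 1/2 (equivalently, with b_{n+1} = 2) is at most 2; i.e. Σ_{n ≥ 0, x_n > 1/2} β*_{n−1}·log(1/x_n) ≤ 2. -/
open Set Filter
open scoped ENNReal

theorem exm_eq_one_sub_fract (y : ℝ) : exm y = 1 - Int.fract (1 / y) := by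
  rw [exm, Int.floor_add_one, Int.fract]
  push_cast
  ring

theorem exm_mem_Ioc (y : ℝ) : exm y ∈ Ioc (0 : ℝ) 1 := by
  rw [exm_eq_one_sub_fract]
  constructor <;> linarith [Int.fract_nonneg (1 / y), Int.fract_lt_one (1 / y)]

theorem iterate_exm_mem_Ioc {x : ℝ} (hx : x ∈ Ioc (0 : ℝ) 1) (n : ℕ) :
    exm^[n] x ∈ Ioc (0 : ℝ) 1 := by
  cases n with
  | zero => exact hx
  | succ n => exact (Function.iterate_succ_apply' exm n x).symm ▸ exm_mem_Ioc _

theorem Real.log_one_div_le_two_mul_one_sub {t : ℝ} (ht : t ∈ Ioc (1 / 2 : ℝ) 1) :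
    Real.log (1 / t) ≤ 2 * (1 - t) := by
  obtain ⟨ht₁, ht₂⟩ := ht
  have ht₀ : 0 < t := by linarith
  calc Real.log (1 / t) ≤ 1 / t - 1 := Real.log_le_sub_one_of_pos (by positivity)
    _ ≤ 2 * (1 - t) := by
      rw [sub_le_iff_le_add, div_le_iff₀ ht₀]
      nlinarith

theorem antitone_prod_range {u : ℕ → ℝ} (hu : ∀ n, u n ∈ Icc (0 : ℝ) 1) :
    Antitone fun n => ∏ i ∈ Finset.range n, u i := by
  refine antitone_nat_of_succ_le fun n => ?_
  rw [Finset.prod_range_succ]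
  exact mul_le_of_le_one_right (Finset.prod_nonneg fun i _ => (hu i).1) (hu n).2

theorem ENNReal.tsum_le_of_le_ofReal_sub_succ {f : ℕ → ℝ≥0∞} {P : ℕ → ℝ}
    (hP : Antitone P) (hP_nonneg : ∀ n, 0 ≤ P n)
    (hf : ∀ n, f n ≤ ENNReal.ofReal (P n - P (n + 1))) :
    ∑' n, f n ≤ ENNReal.ofReal (P 0) := by
  refine ENNReal.tsum_le_of_sum_range_le fun N => ?_
  calc ∑ n ∈ Finset.range N, f n
      ≤ ∑ n ∈ Finset.range N, ENNReal.ofReal (P n - P (n + 1)) :=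
        Finset.sum_le_sum fun n _ => hf n
    _ = ENNReal.ofReal (P 0 - P N) := by
      rw [← ENNReal.ofReal_sum_of_nonneg fun n _ => sub_nonneg.2 (hP n.le_succ),
        Finset.sum_range_sub']
    _ ≤ ENNReal.ofReal (P 0) := ENNReal.ofReal_le_ofReal (by linarith [hP_nonneg N])

theorem sum_over_large_orbit_le_two_general (x : ℝ)
    (hx : x ∈ Set.Ioo (0 : ℝ) 1) :
    (∑' n : ℕ, if (1 / 2 : ℝ) < exm^[n] x then
        ENNReal.ofReal ((∏ i ∈ Finset.range n, exm^[i] x) * Real.log (1 / (exm^[n] x)))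
      else 0) ≤ 2 := by
  have horbit (n : ℕ) := iterate_exm_mem_Ioc (Ioo_subset_Ioc_self hx) n
  set β : ℕ → ℝ := fun n => ∏ i ∈ Finset.range n, exm^[i] x
  have hβ_nonneg (n : ℕ) : 0 ≤ β n := Finset.prod_nonneg fun i _ => (horbit i).1.le
  have hβ_anti : Antitone β := antitone_prod_range fun n => Ioc_subset_Icc_self (horbit n)
  calc _ ≤ ENNReal.ofReal (2 * β 0) := by
        refine ENNReal.tsum_le_of_le_ofReal_sub_succ (hβ_anti.const_mul zero_le_two)
          (fun n => mul_nonneg zero_le_two (hβ_nonneg n)) fun n => ?_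
        split_ifs with hlarge
        · refine ENNReal.ofReal_le_ofReal ?_
          have hlog := Real.log_one_div_le_two_mul_one_sub ⟨hlarge, (horbit n).2⟩
          calc β n * Real.log (1 / exm^[n] x) ≤ β n * (2 * (1 - exm^[n] x)) :=
                mul_le_mul_of_nonneg_left hlog (hβ_nonneg n)
            _ = 2 * β n - 2 * β (n + 1) := by simp only [β, Finset.prod_range_succ]; ring
        · exact zero_le
    _ = 2 := by simp [β]

/-- For every irrational `x ∈ (0,1)`, the sum of `β*_{n−1}·log(1/x_n)` over all
`n ≥ 0` with `x_n > 1/2` (equivalently `b_{n+1} = 2`) is at most `2`. Here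
`x_n = A_0^n(x)` and `β*_{n−1} = x_0⋯x_{n−1}`. -/
theorem sum_over_large_orbit_le_two (x : ℝ) (hirr : Irrational x)
    (hx : x ∈ Set.Ioo (0 : ℝ) 1) :
    (∑' n : ℕ, if (1 / 2 : ℝ) < exm^[n] x then
        ENNReal.ofReal ((∏ i ∈ Finset.range n, exm^[i] x) * Real.log (1 / (exm^[n] x)))
      else 0) ≤ 2 :=
  sum_over_large_orbit_le_two_general x hx
end
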